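/- For every n ≥ 2, the (n+3)-ary Boolean relation R = { (x₁,…,xₙ,x,c₀,c₁) ∈ Bool^{n+3} | ¬(x₁ ∧ ⋯ ∧ xₙ) ∧ (x → x₁ ∧ ⋯ ∧ xₙ) ∧ (c₀ = 0) ∧ (c₁ = 1) } is a weak base of the co-clone it generates (this co-clone is IS^n_{10} in Post's lattice): for every finite set Δ of Boolean relations with Pol(Δ) = Pol({R}) one has pPol(Δ) ⊆ pPol({R}). -/

import Mathlib

/-- A Boolean relation of arity `k`: a set of `k`-tuples over `Bool`. -/
abbrev BRel (k : ℕ) := Set (Fin k → Bool)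

/-- A total `m`-ary Boolean operation `f` preserves a `k`-ary relation `R`. -/
def Preserves {m k : ℕ} (f : (Fin m → Bool) → Bool) (R : BRel k) : Prop :=
  ∀ ts : Fin m → Fin k → Bool, (∀ j, ts j ∈ R) → (fun i => f (fun j => ts j i)) ∈ R

/-- A partial `m`-ary Boolean operation (modelled with `Option Bool`; `none` =
undefined) preserves a `k`-ary relation `R`. -/
def PPreserves {m k : ℕ} (f : (Fin m → Bool) → Option Bool) (R : BRel k) : Prop :=
  ∀ ts : Fin m → Fin k → Bool, (∀ j, ts j ∈ R) →
    ∀ u : Fin k → Bool, (∀ i, f (fun j => ts j i) = some (u i)) → u ∈ R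

/-- The set of all (finitary, total) polymorphisms of a set of relations. -/
def Pol (Γ : Set (Σ k, BRel k)) : Set (Σ m, (Fin m → Bool) → Bool) :=
  { f | ∀ R ∈ Γ, Preserves f.2 R.2 }

/-- The set of all partial polymorphisms of a set of relations. -/
def pPol (Γ : Set (Σ k, BRel k)) : Set (Σ m, (Fin m → Bool) → Option Bool) :=
  { f | ∀ R ∈ Γ, PPreserves f.2 R.2 }

/-- `R` is a weak base of the co-clone it generates: every finite `Δ` with the
same polymorphisms as `R` satisfies `pPol Δ ⊆ pPol {R}`. -/
def IsWeakBase {k : ℕ} (R : BRel k) : Prop :=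
  ∀ Δ : Set (Σ k, BRel k), Δ.Finite →
    Pol Δ = Pol {⟨k, R⟩} → pPol Δ ⊆ pPol {⟨k, R⟩}


/-!
Let `g` be a partial polymorphism of `Δ` and let `t₁, …, t_m ∈ R` be tuples whose columns lie in
the domain of `g`. Compose `g` with the map `e` that fixes the columns and sends every other
argument to the all-zero vector, which is a column since the coordinate `x` vanishes on `R`.
Each coordinate of `e` lies below a projection and preserves the all-one column, so it preserves
`R`, hence `Δ`; therefore `g ∘ e` is a total polymorphism of `Δ`, hence of `R`, and it agrees with
`g` on the columns of the `tᵢ`.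
-/

def columns {m k : ℕ} (ts : Fin m → Fin k → Bool) : Set (Fin m → Bool) :=
  Set.range fun i j => ts j i

section RetractBot

variable {α : Type*} [Preorder α] [OrderBot α] (C : Set α)

open Classical in
noncomputable def retractBot (x : α) : α := if x ∈ C then x else ⊥

theorem retractBot_le (x : α) : retractBot C x ≤ x := by
  unfold retractBot
  split_ifs
  exacts [le_rfl, bot_le]

theorem retractBot_mem (hC : ⊥ ∈ C) (x : α) : retractBot C x ∈ C := by
  unfold retractBot
  split_ifs with hx
  exacts [hx, hC]

theorem retractBot_of_mem {x : α} (hx : x ∈ C) : retractBot C x = x := by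
  simp [retractBot, hx]

end RetractBot

theorem getD_comp_mem_Pol {Δ : Set (Σ k, BRel k)} {m : ℕ} {g : (Fin m → Bool) → Option Bool}
    (hg : ⟨m, g⟩ ∈ pPol Δ) {e : (Fin m → Bool) → Fin m → Bool}
    (he : ∀ j, ⟨m, fun x => e x j⟩ ∈ Pol Δ) (hdom : ∀ x, g (e x) ≠ none) :
    ⟨m, fun x => (g (e x)).getD false⟩ ∈ Pol Δ := by
  intro Q hQ vs hvs
  exact hg Q hQ (fun j ℓ => e (fun i => vs i ℓ) j) (fun j => he j Q hQ vs hvs) _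
    fun ℓ => (Option.getD_of_ne_none (hdom _) false).symm

theorem isWeakBase_of_retraction {k : ℕ} (R : BRel k)
    (h : ∀ (m : ℕ) (ts : Fin m → Fin k → Bool), (∀ j, ts j ∈ R) →
      ∃ e : (Fin m → Bool) → Fin m → Bool, (∀ j, ⟨m, fun x => e x j⟩ ∈ Pol {⟨k, R⟩}) ∧
        (∀ x, e x ∈ columns ts) ∧ ∀ c ∈ columns ts, e c = c) :
    IsWeakBase R := by
  rintro Δ - hPol ⟨m, g⟩ hg S rfl ts hts u hu
  replace hu : ∀ i, g (fun j => ts j i) = some (u i) := hu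
  obtain ⟨e, he, he_mem, he_fix⟩ := h m ts hts
  have hdom : ∀ x, g (e x) ≠ none := fun x => by
    obtain ⟨i, hi⟩ := he_mem x
    simp [← hi, hu i]
  have hf := getD_comp_mem_Pol hg (fun j => hPol ▸ he j) hdom
  rw [hPol] at hf
  convert hf _ rfl ts hts with i
  simp [he_fix _ ⟨i, rfl⟩, hu i]

section ISn10

variable (n : ℕ)

def relISn10 : BRel (n + 3) :=
  { t | ¬ (∀ i : Fin n, t (Fin.castAdd 3 i) = true) ∧
      (t (Fin.natAdd n 0) = true → ∀ i : Fin n, t (Fin.castAdd 3 i) = true) ∧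
      t (Fin.natAdd n 1) = false ∧ t (Fin.natAdd n 2) = true }

variable {n}

theorem apply_natAdd_zero_of_mem_relISn10 {t : Fin (n + 3) → Bool} (ht : t ∈ relISn10 n) :
    t (Fin.natAdd n 0) = false := by
  obtain ⟨hnot, himp, -, -⟩ := ht
  simpa using mt himp hnot

theorem mem_relISn10_of_le {t t' : Fin (n + 3) → Bool} (ht : t ∈ relISn10 n) (hle : t' ≤ t)
    (h_one : t' (Fin.natAdd n 2) = true) : t' ∈ relISn10 n := by
  have h_false : ∀ i, t i = false → t' i = false := fun i hi =>
    le_bot_iff.mp (hi ▸ hle i : t' i ≤ false)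
  refine ⟨fun hall => ht.1 fun i => Bool.le_iff_imp.mp (hle _) (hall i), fun hx => ?_,
    h_false _ ht.2.2.1, h_one⟩
  simp [h_false _ (apply_natAdd_zero_of_mem_relISn10 ht)] at hx

theorem preserves_relISn10 {m : ℕ} {φ : (Fin m → Bool) → Bool} (j : Fin m)
    (hφ : ∀ x, φ x ≤ x j) (h_one : φ ⊤ = true) : Preserves φ (relISn10 n) := by
  intro ss hss
  refine mem_relISn10_of_le (hss j) (fun i => hφ _) ?_
  convert h_one using 2
  exact funext fun i => (hss i).2.2.2

theorem exists_retraction_relISn10 (m : ℕ) (ts : Fin m → Fin (n + 3) → Bool)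
    (hts : ∀ j, ts j ∈ relISn10 n) :
    ∃ e : (Fin m → Bool) → Fin m → Bool,
      (∀ j, ⟨m, fun x => e x j⟩ ∈ Pol {⟨n + 3, relISn10 n⟩}) ∧
        (∀ x, e x ∈ columns ts) ∧ ∀ c ∈ columns ts, e c = c := by
  have h_bot : ⊥ ∈ columns ts :=
    ⟨Fin.natAdd n 0, funext fun j => apply_natAdd_zero_of_mem_relISn10 (hts j)⟩
  have h_top : ⊤ ∈ columns ts := ⟨Fin.natAdd n 2, funext fun j => (hts j).2.2.2⟩
  refine ⟨retractBot (columns ts), fun j => ?_, retractBot_mem _ h_bot,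
    fun c hc => retractBot_of_mem _ hc⟩
  rintro _ rfl
  exact preserves_relISn10 j (fun x => retractBot_le _ x j)
    (show retractBot (columns ts) ⊤ j = true by rw [retractBot_of_mem _ h_top]; rfl)

end ISn10

theorem stmt8 (n : ℕ) :
    IsWeakBase { t : Fin (n + 3) → Bool |
      ¬ (∀ i : Fin n, t (Fin.castLE (by omega) i) = true) ∧
      (t ⟨n, by omega⟩ = true → ∀ i : Fin n, t (Fin.castLE (by omega) i) = true) ∧
      t ⟨n + 1, by omega⟩ = false ∧ t ⟨n + 2, by omega⟩ = true } :=
  isWeakBase_of_retraction (relISn10 n) exists_retraction_relISn10
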